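/- Let h be a homeomorphism of a compact metric space X that is chain-transitive, and let x, y ∈ X. Let π : X̂ → X be a two-fold covering, with each x ∈ X having preimages x̂⁻, x̂⁺, and ĥ a lift of h. Then for every pair x, y ∈ X, lifting pseudo-orbits shows at least one of the following holds: (x̂⁻ ⊣ ŷ⁻ and x̂⁺ ⊣ ŷ⁺) or (x̂⁻ ⊣ ŷ⁺ and x̂⁺ ⊣ ŷ⁻), where ⊣ denotes the pseudo-orbit chain relation for ĥ. Consequently, every chain-recurrence class of ĥ in X̂ projects by π onto all of X. -/

import Mathlib

/-!
An `ε`-pseudo-orbit of `h` starting at `π a` lifts step by step, through the local isometric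
lifting property of `π`, to an `ε`-pseudo-orbit of `ĥ` starting at `a` and ending over the same
point. Chain transitivity of `h` thus gives, for every `ε`, an `ε`-chain from `a` to `b` or to
`σ b`, hence `a ⊣ b` or `a ⊣ σ b`. As `σ` commutes with `ĥ` it carries chains to chains; this
gives the dichotomy and makes `⊣` symmetric. So every point is chain recurrent, the chain class
of `c` is `{d | c ⊣ d}`, and it meets every fibre.
-/

open Set

/-- `a ⊣ b`: for every `ε > 0` there is an `ε`-pseudo-orbit from `a` to `b` of
length `≥ 1`. -/
def ChainRel {X : Type*} [MetricSpace X] (h : X → X) (x y : X) : Prop :=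
  ∀ ε : ℝ, 0 < ε → ∃ n : ℕ, 1 ≤ n ∧ ∃ z : ℕ → X, z 0 = x ∧ z n = y ∧
    ∀ k < n, dist (h (z k)) (z (k + 1)) < ε

def ChainTransSet {X : Type*} [MetricSpace X] (h : X → X) (C : Set X) : Prop :=
  IsCompact C ∧ h '' C = C ∧ ∀ p ∈ C, ∀ q ∈ C, ChainRel h p q

/-- A chain-recurrence class: a maximal chain-transitive compact invariant set. -/
def IsChainClass {X : Type*} [MetricSpace X] (h : X → X) (C : Set X) : Prop :=
  ChainTransSet h C ∧ ∀ C', ChainTransSet h C' → C ⊆ C' → C' = C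

section PseudoOrbit

variable {Y : Type*} [MetricSpace Y] {f : Y → Y} {ε δ : ℝ} {n m : ℕ} {a b c : Y}

def EpsChain (f : Y → Y) (ε : ℝ) (n : ℕ) (a b : Y) : Prop :=
  ∃ z : ℕ → Y, z 0 = a ∧ z n = b ∧ ∀ k < n, dist (f (z k)) (z (k + 1)) < ε

theorem chainRel_iff : ChainRel f a b ↔ ∀ ε, 0 < ε → ∃ n, 1 ≤ n ∧ EpsChain f ε n a b :=
  Iff.rfl

theorem ChainRel.exists_epsChain (h : ChainRel f a b) (hε : 0 < ε) :
    ∃ n, 1 ≤ n ∧ EpsChain f ε n a b :=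
  h ε hε

theorem epsChain_zero : EpsChain f ε 0 a b ↔ a = b :=
  ⟨fun ⟨_, h0, hn, _⟩ => h0.symm.trans hn,
    fun h => ⟨fun _ => a, rfl, h, fun _ hk => absurd hk (Nat.not_lt_zero _)⟩⟩

theorem epsChain_succ :
    EpsChain f ε (n + 1) a b ↔ ∃ c, dist (f a) c < ε ∧ EpsChain f ε n c b := by
  constructor
  · rintro ⟨z, rfl, rfl, hz⟩
    exact ⟨z 1, hz 0 n.succ_pos, fun k => z (k + 1), rfl, rfl, fun k hk => hz (k + 1) (by omega)⟩
  · rintro ⟨c, hc, z, rfl, rfl, hz⟩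
    refine ⟨fun | 0 => a | k + 1 => z k, rfl, rfl, fun k hk => ?_⟩
    cases k with
    | zero => exact hc
    | succ k => exact hz k (by omega)

theorem epsChain_succ' :
    EpsChain f ε (n + 1) a b ↔ ∃ c, EpsChain f ε n a c ∧ dist (f c) b < ε := by
  constructor
  · rintro ⟨z, rfl, rfl, hz⟩
    exact ⟨z n, ⟨z, rfl, rfl, fun k hk => hz k (by omega)⟩, hz n n.lt_succ_self⟩
  · rintro ⟨c, ⟨z, rfl, rfl, hz⟩, hc⟩
    refine ⟨fun k => if k ≤ n then z k else b, by simp, by simp, fun k hk => ?_⟩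
    rcases Nat.lt_succ_iff_lt_or_eq.1 hk with hk | rfl
    · simpa [hk.le, Nat.succ_le_of_lt hk] using hz k hk
    · simpa using hc

theorem EpsChain.mono (h : EpsChain f δ n a b) (hδε : δ ≤ ε) : EpsChain f ε n a b :=
  let ⟨z, h0, hn, hz⟩ := h
  ⟨z, h0, hn, fun k hk => (hz k hk).trans_le hδε⟩

theorem EpsChain.trans (hab : EpsChain f ε n a b) (hbc : EpsChain f ε m b c) :
    EpsChain f ε (n + m) a c := by
  induction n generalizing a with
  | zero =>
    rw [epsChain_zero.1 hab, zero_add]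
    exact hbc
  | succ n ih =>
    obtain ⟨d, had, hdb⟩ := epsChain_succ.1 hab
    rw [Nat.succ_add]
    exact epsChain_succ.2 ⟨d, had, ih hdb⟩

theorem EpsChain.map {g : Y → Y} (hg : ∀ ⦃u v⦄, dist u v < δ → dist (g u) (g v) < ε)
    (hgf : ∀ y, g (f y) = f (g y)) (h : EpsChain f δ n a b) : EpsChain f ε n (g a) (g b) :=
  let ⟨z, h0, hn, hz⟩ := h
  ⟨g ∘ z, by simp [h0], by simp [hn], fun k hk => by simpa [hgf] using hg (hz k hk)⟩

theorem ChainRel.trans (hab : ChainRel f a b) (hbc : ChainRel f b c) : ChainRel f a c :=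
  fun ε hε =>
    let ⟨n, hn, hab⟩ := hab.exists_epsChain hε
    let ⟨m, _, hbc⟩ := hbc.exists_epsChain hε
    ⟨n + m, by omega, hab.trans hbc⟩

theorem ChainRel.map {g : Y → Y} (hg : UniformContinuous g) (hgf : ∀ y, g (f y) = f (g y))
    (h : ChainRel f a b) : ChainRel f (g a) (g b) := by
  intro ε hε
  obtain ⟨δ, hδ, hgδ⟩ := Metric.uniformContinuous_iff.1 hg ε hε
  obtain ⟨n, hn, hab⟩ := h.exists_epsChain hδ
  exact ⟨n, hn, hab.map hgδ hgf⟩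

theorem ChainRel.apply_right (h : ChainRel f a b) : ChainRel f a (f b) := fun ε hε =>
  let ⟨n, _, hab⟩ := h.exists_epsChain hε
  ⟨n + 1, by omega, epsChain_succ'.2 ⟨b, hab, by simpa using hε⟩⟩

theorem ChainRel.of_apply_left (h : ChainRel f (f a) b) : ChainRel f a b := fun ε hε =>
  let ⟨n, _, hab⟩ := h.exists_epsChain hε
  ⟨n + 1, by omega, epsChain_succ.2 ⟨f a, by simpa using hε, hab⟩⟩

/-- Appending `b ⊣ b` makes the chain from `a` at least two steps long, so that by uniform
continuity its first step can be absorbed into the second. -/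
theorem ChainRel.apply_left (hf : UniformContinuous f) (hab : ChainRel f a b)
    (hbb : ChainRel f b b) : ChainRel f (f a) b := by
  intro ε hε
  obtain ⟨δ, hδ, hfδ⟩ := Metric.uniformContinuous_iff.1 hf (ε / 2) (half_pos hε)
  have hδ' : 0 < min δ (ε / 2) := lt_min hδ (half_pos hε)
  obtain ⟨n, hn, hab⟩ := hab.exists_epsChain hδ'
  obtain ⟨m, hm, hbb⟩ := hbb.exists_epsChain hδ'
  obtain ⟨k, hk⟩ : ∃ k, n + m = k + 2 := ⟨n + m - 2, by omega⟩
  have hchain := hab.trans hbb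
  rw [hk] at hchain
  obtain ⟨c, hac, hchain⟩ := epsChain_succ.1 hchain
  obtain ⟨c', hcc', hchain⟩ := epsChain_succ.1 hchain
  refine ⟨k + 1, by omega, epsChain_succ.2 ⟨c', ?_, hchain.mono ((min_le_right _ _).trans (half_le_self hε.le))⟩⟩
  calc dist (f (f a)) c' ≤ dist (f (f a)) (f c) + dist (f c) c' := dist_triangle _ _ _
    _ < ε / 2 + ε / 2 :=
        add_lt_add (hfδ (hac.trans_le (min_le_left _ _))) (hcc'.trans_le (min_le_right _ _))
    _ = ε := add_halves ε

theorem chainRel_or_chainRel_of_forall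
    (h : ∀ ε, 0 < ε → (∃ n, 1 ≤ n ∧ EpsChain f ε n a b) ∨ ∃ n, 1 ≤ n ∧ EpsChain f ε n a c) :
    ChainRel f a b ∨ ChainRel f a c := by
  refine or_iff_not_imp_left.2 fun hab ε hε => ?_
  rw [chainRel_iff] at hab
  push Not at hab
  obtain ⟨δ, hδ, hnot⟩ := hab
  rcases h (min ε δ) (lt_min hε hδ) with ⟨n, hn, hab⟩ | ⟨n, hn, hac⟩
  · exact absurd (hab.mono (min_le_right _ _)) (hnot n hn)
  · exact ⟨n, hn, hac.mono (min_le_left _ _)⟩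

theorem isClosed_setOf_chainRel_from (f : Y → Y) (c : Y) : IsClosed {d | ChainRel f c d} := by
  refine isClosed_of_closure_subset fun d hd ε hε => ?_
  obtain ⟨d', hd', hdd'⟩ := Metric.mem_closure_iff.1 hd (ε / 2) (half_pos hε)
  obtain ⟨_ | n, hn, hcd'⟩ := (show ChainRel _ _ _ from hd').exists_epsChain (half_pos hε)
  · omega
  obtain ⟨e, hce, hed'⟩ := epsChain_succ'.1 hcd'
  refine ⟨n + 1, hn, epsChain_succ'.2 ⟨e, hce.mono (half_le_self hε.le), ?_⟩⟩
  calc dist (f e) d ≤ dist (f e) d' + dist d' d := dist_triangle _ _ _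
    _ < ε / 2 + ε / 2 := add_lt_add hed' (by rwa [dist_comm])
    _ = ε := add_halves ε

theorem isClosed_setOf_chainRel_to (hf : UniformContinuous f) (c : Y) :
    IsClosed {d | ChainRel f d c} := by
  refine isClosed_of_closure_subset fun d hd ε hε => ?_
  obtain ⟨δ, hδ, hfδ⟩ := Metric.uniformContinuous_iff.1 hf (ε / 2) (half_pos hε)
  obtain ⟨d', hd', hdd'⟩ := Metric.mem_closure_iff.1 hd δ hδ
  obtain ⟨_ | n, hn, hd'c⟩ := (show ChainRel _ _ _ from hd').exists_epsChain (half_pos hε)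
  · omega
  obtain ⟨e, hd'e, hec⟩ := epsChain_succ.1 hd'c
  refine ⟨n + 1, hn, epsChain_succ.2 ⟨e, ?_, hec.mono (half_le_self hε.le)⟩⟩
  calc dist (f d) e ≤ dist (f d) (f d') + dist (f d') e := dist_triangle _ _ _
    _ < ε / 2 + ε / 2 := add_lt_add (hfδ hdd') hd'e
    _ = ε := add_halves ε

end PseudoOrbit

section ChainClass

variable {Y : Type*} [MetricSpace Y] [CompactSpace Y] {f : Y ≃ₜ Y} {C : Set Y} {a c : Y}

theorem chainTransSet_setOf_chainRel (f : Y ≃ₜ Y) (a : Y) :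
    ChainTransSet f {d | ChainRel f a d ∧ ChainRel f d a} := by
  have hf : UniformContinuous f := CompactSpace.uniformContinuous_of_continuous f.continuous
  have hf' : UniformContinuous f.symm :=
    CompactSpace.uniformContinuous_of_continuous f.symm.continuous
  refine ⟨((isClosed_setOf_chainRel_from f a).inter (isClosed_setOf_chainRel_to hf a)).isCompact,
    Subset.antisymm ?_ ?_, fun p hp q hq => hp.2.trans hq.1⟩
  · rintro _ ⟨d, ⟨had, hda⟩, rfl⟩
    exact ⟨had.apply_right, hda.apply_left hf (had.trans hda)⟩
  · rintro d ⟨had, hda⟩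
    have hd' : ChainRel f (f.symm d) (f.symm d) := (hda.trans had).map hf' fun y => by simp
    have hdd' : ChainRel f d (f.symm d) := by simpa using hd'.apply_left hf hd'
    exact ⟨f.symm d, ⟨had.trans hdd', ChainRel.of_apply_left (by simpa using hda)⟩,
      f.apply_symm_apply d⟩

theorem IsChainClass.eq_setOf_chainRel (hC : IsChainClass f C) (hc : c ∈ C) :
    {d | ChainRel f c d ∧ ChainRel f d c} = C :=
  hC.2 _ (chainTransSet_setOf_chainRel f c) fun d hd =>
    ⟨hC.1.2.2 c hc d hd, hC.1.2.2 d hd c hc⟩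

theorem IsChainClass.nonempty (hC : IsChainClass f C) (ha : ChainRel f a a) : C.Nonempty := by
  refine nonempty_iff_ne_empty.2 fun hC₀ => ?_
  have hD := hC.2 _ (chainTransSet_setOf_chainRel f a) (hC₀ ▸ empty_subset _)
  have haD : a ∈ {d | ChainRel f a d ∧ ChainRel f d a} := ⟨ha, ha⟩
  rw [hD, hC₀] at haD
  exact haD

end ChainClass

section Deck

variable {Y : Type*} [MetricSpace Y] {f σ : Y → Y} {a b : Y}

theorem ChainRel.symm_of_deck (hσ : UniformContinuous σ) (hσf : ∀ y, σ (f y) = f (σ y))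
    (hσσ : ∀ y, σ (σ y) = y) (hor : ∀ a b, ChainRel f a b ∨ ChainRel f a (σ b))
    (hab : ChainRel f a b) : ChainRel f b a := by
  refine (hor b a).elim id fun hbσa => hbσa.trans ((hab.map hσ hσf).trans ?_)
  simpa [hσσ] using hbσa.map hσ hσf

theorem chainRel_self_of_deck (hσ : UniformContinuous σ) (hσf : ∀ y, σ (f y) = f (σ y))
    (hσσ : ∀ y, σ (σ y) = y) (hor : ∀ a b, ChainRel f a b ∨ ChainRel f a (σ b)) (a : Y) :
    ChainRel f a a :=
  (hor a a).elim id fun h => h.trans (h.symm_of_deck hσ hσf hσσ hor)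

theorem chainRel_dichotomy_of_deck (hσ : UniformContinuous σ) (hσf : ∀ y, σ (f y) = f (σ y))
    (hσσ : ∀ y, σ (σ y) = y) (hor : ∀ a b, ChainRel f a b ∨ ChainRel f a (σ b)) (a b : Y) :
    (ChainRel f a b ∧ ChainRel f (σ a) (σ b)) ∨ (ChainRel f a (σ b) ∧ ChainRel f (σ a) b) := by
  rcases hor a b with hab | hab
  · exact Or.inl ⟨hab, hab.map hσ hσf⟩
  · exact Or.inr ⟨hab, by simpa [hσσ] using hab.map hσ hσf⟩

end Deck

section Covering

variable {X Xhat : Type*} [MetricSpace X] [MetricSpace Xhat] {h : X → X} {hhat : Xhat → Xhat}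
  {π : Xhat → X} {r ε : ℝ}

theorem EpsChain.exists_lift (hliftmap : ∀ a, π (hhat a) = h (π a))
    (hπlift : ∀ (a : Xhat) (y : X), dist (π a) y < r →
        ∃ b : Xhat, π b = y ∧ dist a b = dist (π a) y)
    (hεr : ε ≤ r) {n : ℕ} {x y : X} (hxy : EpsChain h ε n x y) {a : Xhat} (ha : π a = x) :
    ∃ b, π b = y ∧ EpsChain hhat ε n a b := by
  induction n generalizing x a with
  | zero => exact ⟨a, ha.trans (epsChain_zero.1 hxy), epsChain_zero.2 rfl⟩
  | succ n ih =>
    obtain ⟨c, hc, hcy⟩ := epsChain_succ.1 hxy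
    have hc' : dist (π (hhat a)) c < ε := by rwa [hliftmap, ha]
    obtain ⟨a', rfl, ha'⟩ := hπlift _ _ (hc'.trans_le hεr)
    obtain ⟨b, hb, ha'b⟩ := ih hcy rfl
    exact ⟨b, hb, epsChain_succ.2 ⟨a', ha' ▸ hc', ha'b⟩⟩

theorem chainRel_or_chainRel_deck (σ : Xhat → Xhat)
    (hfib : ∀ a b, π a = π b → b = a ∨ b = σ a) (hliftmap : ∀ a, π (hhat a) = h (π a))
    (hr : 0 < r) (hπlift : ∀ (a : Xhat) (y : X), dist (π a) y < r →
        ∃ b : Xhat, π b = y ∧ dist a b = dist (π a) y)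
    (hct : ∀ x y : X, ChainRel h x y) (a b : Xhat) :
    ChainRel hhat a b ∨ ChainRel hhat a (σ b) := by
  refine chainRel_or_chainRel_of_forall fun ε hε => ?_
  obtain ⟨n, hn, hchain⟩ := (hct (π a) (π b)).exists_epsChain (lt_min hε hr)
  obtain ⟨b', hb', hab'⟩ := hchain.exists_lift hliftmap hπlift (min_le_right _ _) rfl
  replace hab' := hab'.mono (min_le_left _ _)
  rcases hfib b b' hb'.symm with rfl | rfl
  exacts [Or.inl ⟨n, hn, hab'⟩, Or.inr ⟨n, hn, hab'⟩]

end Covering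

theorem stmt9_general {X Xhat : Type*} [MetricSpace X]
    [MetricSpace Xhat] [CompactSpace Xhat]
    (h : X ≃ₜ X) (hhat : Xhat ≃ₜ Xhat) (σ : Xhat ≃ₜ Xhat) (π : Xhat → X)
    (hπsurj : Function.Surjective π)
    (hπσ : ∀ a, π (σ a) = π a) (hσinv : ∀ a, σ (σ a) = a)
    (hfib : ∀ a b, π a = π b → b = a ∨ b = σ a)
    (hliftmap : ∀ a, π (hhat a) = h (π a))
    (hcomm : ∀ a, hhat (σ a) = σ (hhat a))
    (r : ℝ) (hr : 0 < r)
    (hπlift : ∀ (a : Xhat) (y : X), dist (π a) y < r →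
        ∃ b : Xhat, π b = y ∧ dist a b = dist (π a) y)
    (hct : ∀ x y : X, ChainRel (⇑h) x y) :
    (∀ a b : Xhat,
        (ChainRel (⇑hhat) a b ∧ ChainRel (⇑hhat) (σ a) (σ b)) ∨
        (ChainRel (⇑hhat) a (σ b) ∧ ChainRel (⇑hhat) (σ a) b)) ∧
      ∀ C : Set Xhat, IsChainClass (⇑hhat) C → π '' C = univ := by
  have hσ : UniformContinuous σ := CompactSpace.uniformContinuous_of_continuous σ.continuous
  have hσf : ∀ a, σ (hhat a) = hhat (σ a) := fun a => (hcomm a).symm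
  have hor := chainRel_or_chainRel_deck σ hfib hliftmap hr hπlift hct
  refine ⟨chainRel_dichotomy_of_deck hσ hσf hσinv hor, fun C hC => eq_univ_of_forall fun x => ?_⟩
  obtain ⟨b, rfl⟩ := hπsurj x
  obtain ⟨c, hc⟩ := hC.nonempty (chainRel_self_of_deck hσ hσf hσinv hor b)
  rw [← hC.eq_setOf_chainRel hc]
  rcases hor c b with hcb | hcb
  · exact ⟨b, ⟨hcb, hcb.symm_of_deck hσ hσf hσinv hor⟩, rfl⟩
  · exact ⟨σ b, ⟨hcb, hcb.symm_of_deck hσ hσf hσinv hor⟩, hπσ b⟩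

/-- Let `h` be a chain-transitive homeomorphism of the compact metric space `X`
and `π : X̂ → X` a two-fold covering (with deck involution `σ` and a metric on
`X̂` making `π` an isometry on small balls, with the lifting property), and `ĥ` a
lift of `h`. Then for all `a, b ∈ X̂` (lying over `x, y ∈ X`), at least one of
`(a ⊣ b and σa ⊣ σb)` or `(a ⊣ σb and σa ⊣ b)` holds for `ĥ`; consequently every
chain-recurrence class of `ĥ` projects by `π` onto all of `X`. -/
theorem stmt9 {X Xhat : Type*} [MetricSpace X] [CompactSpace X]
    [MetricSpace Xhat] [CompactSpace Xhat]
    (h : X ≃ₜ X) (hhat : Xhat ≃ₜ Xhat) (σ : Xhat ≃ₜ Xhat) (π : Xhat → X)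
    (hπcont : Continuous π) (hπsurj : Function.Surjective π)
    (hπσ : ∀ a, π (σ a) = π a) (hσinv : ∀ a, σ (σ a) = a)
    (hσfree : ∀ a, σ a ≠ a)
    (hfib : ∀ a b, π a = π b → b = a ∨ b = σ a)
    (hliftmap : ∀ a, π (hhat a) = h (π a))
    (hcomm : ∀ a, hhat (σ a) = σ (hhat a))
    (r : ℝ) (hr : 0 < r)
    (hπiso : ∀ a b : Xhat, dist a b < r → dist (π a) (π b) = dist a b)
    (hπlift : ∀ (a : Xhat) (y : X), dist (π a) y < r →
        ∃ b : Xhat, π b = y ∧ dist a b = dist (π a) y)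
    (hct : ∀ x y : X, ChainRel (⇑h) x y) :
    (∀ a b : Xhat,
        (ChainRel (⇑hhat) a b ∧ ChainRel (⇑hhat) (σ a) (σ b)) ∨
        (ChainRel (⇑hhat) a (σ b) ∧ ChainRel (⇑hhat) (σ a) b)) ∧
      ∀ C : Set Xhat, IsChainClass (⇑hhat) C → π '' C = univ :=
  stmt9_general h hhat σ π hπsurj hπσ hσinv hfib hliftmap hcomm r hr hπlift hct
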